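/- Let X be a Peano (connected, locally path-connected) H-SLT space with H ≤ π₁(X,x₀) locally quasinormal, and let α be a path from x₀ with α(1)=x. Then H_α is closed in the quasitopological fundamental group π₁^{qtop}(X,x) if and only if H_α is closed in π₁^{wh}(X,x) (the whisker topology). -/

import Mathlib

/-!
Closedness in `π₁^{qtop}` always implies closedness in the whisker topology: loops inside a
small neighbourhood of the basepoint are compact-open close to the constant loop.

Conversely, let `[γ] ∉ H_α` and let `U` be a whisker neighbourhood, `[γ]·π₁(U) ∩ H_α = ∅`.
Local quasinormality gives `V ⊆ U` for which `K = H_α · i_#π₁(V)` is a subgroup, and the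
`H`-SLT property says that after travelling along `γ` up to time `s`, every loop in some
neighbourhood `W_s` of `γ(s)` is trivial modulo `K`. Subdividing `γ` along the cover by the
`W_s`, any loop `δ` compact-open close to `γ` stays in the same sets and passes through the
same path components at the subdivision points, and comparing `γ` and `δ` interval by interval
shows `[δ]⁻¹[γ] ∈ K`. So `[δ] ∈ H_α` would put `[γ]` in `H_α · i_#π₁(V)`, which is excluded.
-/

open CategoryTheory Topology
open scoped Pointwise

noncomputable section
namespace Paper

variable {X : Type*} [TopologicalSpace X]

attribute [local instance] Path.Homotopic.setoid

/-- The homotopy class of a loop as an element of the fundamental group. -/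
def loopClass {x : X} (γ : Path x x) : FundamentalGroup X x :=
  (⟦γ⟧ : FundamentalGroupoid.mk x ⟶ FundamentalGroupoid.mk x)

/-- Conjugation of the fundamental group along a path: `h ↦ [ᾱ ∗ h ∗ α]`. -/
def pathConj {x₀ x : X} (α : Path x₀ x) :
    FundamentalGroup X x₀ ≃* FundamentalGroup X x :=
  FundamentalGroup.fundamentalGroupMulEquivOfPath α

/-- The path-conjugate subgroup `H_α = [ᾱ H α]`. -/
def conjSubgroup {x₀ x : X} (H : Subgroup (FundamentalGroup X x₀)) (α : Path x₀ x) :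
    Subgroup (FundamentalGroup X x) :=
  H.map (pathConj α).toMonoidHom

/-- `π(α,V)`: the subgroup of `π₁(X,x₀)` generated by classes `[α∗β∗ᾱ]`
with `β` a loop at `α(1)` lying in `V`. -/
def piSub {x₀ x : X} (α : Path x₀ x) (V : Set X) : Subgroup (FundamentalGroup X x₀) :=
  Subgroup.closure
    {g | ∃ β : Path x x, (∀ t, β t ∈ V) ∧ g = loopClass ((α.trans β).trans α.symm)}

/-- `i₍#₎π₁(V,x)`: the image in `π₁(X,x)` of the fundamental group of `V`. -/
def loopSubgroup (x : X) (V : Set X) : Subgroup (FundamentalGroup X x) :=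
  Subgroup.closure {g | ∃ β : Path x x, (∀ t, β t ∈ V) ∧ g = loopClass β}

/-- `H` is locally quasinormal. -/
def LocallyQuasinormal {x₀ : X} (H : Subgroup (FundamentalGroup X x₀)) : Prop :=
  ∀ (x : X) (α : Path x₀ x) (U : Set X), IsOpen U → x ∈ U →
    ∃ V : Set X, V ⊆ U ∧ IsOpen V ∧ x ∈ V ∧
      (H : Set (FundamentalGroup X x₀)) * (piSub α V : Set (FundamentalGroup X x₀)) =
        (piSub α V : Set (FundamentalGroup X x₀)) * (H : Set (FundamentalGroup X x₀))

/-- `X` is an `H`-SLT space at the basepoint of `H`. -/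
def SLTAt {b : X} (H : Subgroup (FundamentalGroup X b)) : Prop :=
  ∀ (x : X) (α : Path b x) (U : Set X), IsOpen U → b ∈ U →
    ∃ V : Set X, IsOpen V ∧ x ∈ V ∧
      ∀ β : Path x x, (∀ t, β t ∈ V) →
        loopClass ((α.trans β).trans α.symm) ∈
          (H : Set (FundamentalGroup X b)) * (loopSubgroup b U : Set (FundamentalGroup X b))

/-- `X` is an `H`-SLT space. -/
def IsHSLT {x₀ : X} (H : Subgroup (FundamentalGroup X x₀)) : Prop :=
  ∀ (x : X) (δ : Path x₀ x), SLTAt (conjSubgroup H δ)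

/-- `X` is a strong `H`-SLT space at the basepoint of `H`. -/
def StrongSLTAt {b : X} (H : Subgroup (FundamentalGroup X b)) : Prop :=
  ∀ (x : X) (U : Set X), IsOpen U → b ∈ U →
    ∃ V : Set X, IsOpen V ∧ x ∈ V ∧
      ∀ (α : Path b x) (β : Path x x), (∀ t, β t ∈ V) →
        loopClass ((α.trans β).trans α.symm) ∈
          (H : Set (FundamentalGroup X b)) * (loopSubgroup b U : Set (FundamentalGroup X b))

/-- `X` is a strong `H`-SLT space. -/
def IsStrongHSLT {x₀ : X} (H : Subgroup (FundamentalGroup X x₀)) : Prop :=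
  ∀ (x : X) (δ : Path x₀ x), StrongSLTAt (conjSubgroup H δ)

/-- `X` is homotopically Hausdorff relative to `H`. -/
def HomotopicallyHausdorffRel {b : X} (H : Subgroup (FundamentalGroup X b)) : Prop :=
  ∀ (x : X) (α : Path b x) (g : FundamentalGroup X b), g ∉ H →
    ∃ U : Set X, IsOpen U ∧ x ∈ U ∧
      ∀ β : Path x x, (∀ t, β t ∈ U) →
        ∀ h ∈ H, loopClass ((α.trans β).trans α.symm) ≠ h * g

/-- `X` is homotopically path Hausdorff relative to `H`. -/
def HomotopicallyPathHausdorffRel {b : X} (H : Subgroup (FundamentalGroup X b)) : Prop :=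
  ∀ (x : X) (α β : Path b x), loopClass (α.trans β.symm) ∉ H →
    ∃ (n : ℕ), 0 < n ∧
    ∃ (t : Fin (n + 1) → unitInterval) (U : Fin n → Set X),
      StrictMono t ∧ t 0 = 0 ∧ t (Fin.last n) = 1 ∧
      (∀ i : Fin n, IsOpen (U i) ∧ ∀ s ∈ Set.Icc (t i.castSucc) (t i.succ), α s ∈ U i) ∧
      ∀ γ : Path b x,
        (∀ i : Fin n, ∀ s ∈ Set.Icc (t i.castSucc) (t i.succ), γ s ∈ U i) →
        (∀ j : Fin (n + 1), γ (t j) = α (t j)) →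
        loopClass (γ.trans β.symm) ∉ H

/-- The collection of paths starting at `b`, with free endpoint. -/
def PathsFrom (b : X) := Σ x : X, Path b x

/-- The relation identifying paths in the standard construction `X̃_H`. -/
def stdRel {b : X} (H : Subgroup (FundamentalGroup X b)) :
    PathsFrom b → PathsFrom b → Prop :=
  fun p q => ∃ h : q.1 = p.1, loopClass (p.2.trans (h ▸ q.2).symm) ∈ H

/-- The standard construction `X̃_H`. -/
def StdConstr {b : X} (H : Subgroup (FundamentalGroup X b)) := Quot (stdRel H)

/-- The class `[α]_H` of a path in the standard construction. -/
def stdClass {b : X} (H : Subgroup (FundamentalGroup X b)) (p : PathsFrom b) :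
    StdConstr H :=
  Quot.mk _ p

/-- The basic whisker neighborhood `N_H([α]_H, U)`. -/
def whiskerNbhd {b : X} (H : Subgroup (FundamentalGroup X b)) (p : PathsFrom b)
    (U : Set X) : Set (StdConstr H) :=
  {z | ∃ (y : X) (δ : Path p.1 y), (∀ t, δ t ∈ U) ∧ z = stdClass H ⟨y, p.2.trans δ⟩}

/-- The whisker topology on the standard construction. -/
def whiskerTopology {b : X} (H : Subgroup (FundamentalGroup X b)) :
    TopologicalSpace (StdConstr H) :=
  TopologicalSpace.generateFrom
    {s | ∃ (p : PathsFrom b) (U : Set X), IsOpen U ∧ p.1 ∈ U ∧ s = whiskerNbhd H p U}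

/-- The Spanier subgroup `π(𝒰, y)` of `π₁(X,y)` associated to a family `𝒰` of subsets. -/
def spanier (y : X) (𝒰 : Set (Set X)) : Subgroup (FundamentalGroup X y) :=
  Subgroup.closure
    {g | ∃ (z : X) (γ : Path y z) (β : Path z z), (∃ U ∈ 𝒰, ∀ t, β t ∈ U) ∧
          g = loopClass ((γ.trans β).trans γ.symm)}

/-- An open cover of `X`. -/
def IsOpenCover (𝒰 : Set (Set X)) : Prop :=
  (∀ U ∈ 𝒰, IsOpen U) ∧ ⋃₀ 𝒰 = Set.univ

/-- The basic lasso neighborhood `N_H([α]_H, 𝒰, U)`. -/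
def lassoNbhd {b : X} (H : Subgroup (FundamentalGroup X b)) (p : PathsFrom b)
    (𝒰 : Set (Set X)) (U : Set X) : Set (StdConstr H) :=
  {z | ∃ (l : Path p.1 p.1) (y : X) (δ : Path p.1 y),
        loopClass l ∈ spanier p.1 𝒰 ∧ (∀ t, δ t ∈ U) ∧
        z = stdClass H ⟨y, (p.2.trans l).trans δ⟩}

/-- The lasso topology on the standard construction. -/
def lassoTopology {b : X} (H : Subgroup (FundamentalGroup X b)) :
    TopologicalSpace (StdConstr H) :=
  TopologicalSpace.generateFrom
    {s | ∃ (p : PathsFrom b) (𝒰 : Set (Set X)) (U : Set X),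
          IsOpenCover 𝒰 ∧ U ∈ 𝒰 ∧ IsOpen U ∧ p.1 ∈ U ∧ s = lassoNbhd H p 𝒰 U}

/-- The endpoint projection `p_H : X̃_H → X`. -/
def endPt {b : X} (H : Subgroup (FundamentalGroup X b)) : StdConstr H → X :=
  Quot.lift (fun p => p.1) (fun _ _ h => h.1.symm)

/-- The whisker topology on the fundamental group `π₁^{wh}(X,x)`. -/
def whiskerTopOnPi (x : X) : TopologicalSpace (FundamentalGroup X x) :=
  TopologicalSpace.generateFrom
    {s | ∃ (g : FundamentalGroup X x) (U : Set X), IsOpen U ∧ x ∈ U ∧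
          s = {g' | ∃ β : Path x x, (∀ t, β t ∈ U) ∧ g' = g * loopClass β}}

/-- The quasitopological fundamental group topology `π₁^{qtop}(X,x)`: the quotient of the
compact-open topology on the loop space. -/
def qTop (x : X) : TopologicalSpace (FundamentalGroup X x) :=
  TopologicalSpace.coinduced loopClass inferInstance

/-- A map `p : E → X` (with `E` carrying the topology `tE`) has the unique path
lifting property. -/
def UniquePathLifting {E : Type*} (tE : TopologicalSpace E) (p : E → X) : Prop :=
  letI := tE
  ∀ f g : C(unitInterval, E), (∀ t, p (f t) = p (g t)) → f 0 = g 0 → f = g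

/-- The small loop subgroup `π₁ˢ(X,x)`. -/
def smallLoopSubgroup (x : X) : Subgroup (FundamentalGroup X x) :=
  ⨅ (U : Set X) (_ : IsOpen U) (_ : x ∈ U), loopSubgroup x U

/-- The Spanier group `π₁^{sp}(X,x)`: the intersection of all Spanier subgroups. -/
def spanierGroup (x : X) : Subgroup (FundamentalGroup X x) :=
  ⨅ (𝒰 : Set (Set X)) (_ : IsOpenCover 𝒰), spanier x 𝒰

/-- The path Spanier subgroup `π̃(𝒱, x₀)` of a path open cover `𝒱`. -/
def pathSpanier {b : X} (𝒱 : PathsFrom b → Set X) : Subgroup (FundamentalGroup X b) :=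
  Subgroup.closure
    {g | ∃ (p : PathsFrom b) (β : Path p.1 p.1), (∀ t, β t ∈ 𝒱 p) ∧
          g = loopClass ((p.2.trans β).trans p.2.symm)}

end Paper
end

namespace Paper
variable {X : Type*} [TopologicalSpace X]

attribute [local instance] Path.Homotopic.setoid

open FundamentalGroupoid Filter Set unitInterval

theorem _root_.Subgroup.coe_sup_of_mul_comm {G : Type*} [Group G] {H K : Subgroup G}
    (h : (H : Set G) * K = K * H) : ((H ⊔ K : Subgroup G) : Set G) = H * K := by
  have hmul : (H : Set G) * K * (H * K) = H * K := by
    rw [mul_assoc, ← mul_assoc (K : Set G), ← h, mul_assoc, ← mul_assoc (H : Set G),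
      coe_mul_coe, coe_mul_coe]
  have hinv : ((H : Set G) * K)⁻¹ = H * K := by
    rw [mul_inv_rev, inv_coe_set, inv_coe_set, h]
  rw [Subgroup.sup_eq_closure_mul]
  refine Set.Subset.antisymm (fun x hx => ?_) Subgroup.subset_closure
  induction hx using Subgroup.closure_induction with
  | mem x hx => exact hx
  | one => exact ⟨1, H.one_mem, 1, K.one_mem, mul_one 1⟩
  | mul x y _ _ hx hy => exact hmul ▸ Set.mul_mem_mul hx hy
  | inv x _ hx => exact hinv ▸ Set.inv_mem_inv.mpr hx

section Groupoid

variable {a b c : X}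

noncomputable def pathHom (p : Path a b) : mk a ⟶ mk b := ⟦p⟧

theorem pathHom_trans (p : Path a b) (q : Path b c) :
    pathHom (p.trans q) = pathHom p ≫ pathHom q := rfl

theorem pathHom_symm (p : Path a b) : pathHom p.symm = inv (pathHom p) := by
  rw [← Groupoid.inv_eq_inv]; rfl

theorem pathHom_refl : pathHom (Path.refl a) = 𝟙 (mk a) := rfl

theorem pathHom_eq_of_homotopic {p q : Path a b} (h : p.Homotopic q) : pathHom p = pathHom q :=
  Quotient.sound h

theorem pathHom_cast {a' b' : X} (p : Path a b) (ha : a' = a) (hb : b' = b) :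
    pathHom (p.cast ha hb) =
      eqToHom (congrArg mk ha) ≫ pathHom p ≫ eqToHom (congrArg mk hb.symm) := by
  subst ha hb; simp

theorem pathHom_eq_eqToHom {p : Path a b} (h : ∀ t, p t = c) :
    pathHom p = eqToHom (congrArg mk <|
      (p.source.symm.trans (h 0)).trans ((h 1).symm.trans p.target)) := by
  have ha : a = c := p.source.symm.trans (h 0)
  have hb : b = c := p.target.symm.trans (h 1)
  subst ha hb
  obtain rfl : p = Path.refl _ := Path.ext (funext h)
  rfl

theorem fundamentalGroup_inv_eq (g : FundamentalGroup X a) : g⁻¹ = inv g :=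
  Groupoid.inv_eq_inv g

theorem pathHom_eq_loopClass (p : Path a a) : (pathHom p : FundamentalGroup X a) = loopClass p :=
  rfl

theorem loopClass_trans (p q : Path a a) : loopClass (p.trans q) = loopClass q * loopClass p := rfl

theorem loopClass_symm (p : Path a a) : loopClass p.symm = (loopClass p)⁻¹ := rfl

noncomputable def initSegHom (γ : Path a b) (s : I) : mk a ⟶ mk (γ s) :=
  eqToHom (congrArg mk γ.source.symm) ≫ pathHom (γ.subpath 0 s)

theorem initSegHom_comp_subpath (γ : Path a b) (s t : I) :
    initSegHom γ s ≫ pathHom (γ.subpath s t) = initSegHom γ t := by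
  rw [initSegHom, initSegHom, Category.assoc, ← pathHom_trans,
    pathHom_eq_of_homotopic ⟨Path.Homotopy.subpathTransSubpath γ 0 s t⟩]

theorem initSegHom_of_eq_zero (γ : Path a b) {s : I} (hs : s = 0) :
    initSegHom γ s = eqToHom (by rw [hs, γ.source]) := by
  subst hs
  simp [initSegHom, pathHom_refl]

theorem initSegHom_of_eq_one (γ : Path a b) {s : I} (hs : s = 1) :
    initSegHom γ s = pathHom γ ≫ eqToHom (by rw [hs, γ.target]) := by
  subst hs
  simp [initSegHom, pathHom_cast]

end Groupoid

section EquivMod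

variable {a y z : X} {K : Subgroup (FundamentalGroup X a)} {f g h : mk a ⟶ mk y}

/-- For paths `p q` starting at `a` this is `stdRel K p q`, the relation identifying them in the
standard construction `X̃_K`. -/
def EquivMod (K : Subgroup (FundamentalGroup X a)) (f g : mk a ⟶ mk y) : Prop :=
  (f ≫ inv g : FundamentalGroup X a) ∈ K

theorem equivMod_iff_inv_mul_mem {f g : FundamentalGroup X a} : EquivMod K f g ↔ g⁻¹ * f ∈ K := by
  rw [EquivMod, fundamentalGroup_inv_eq, End.mul_def]

theorem EquivMod.refl (f : mk a ⟶ mk y) : EquivMod K f f := by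
  rw [EquivMod, IsIso.hom_inv_id]; exact K.one_mem

theorem EquivMod.trans (hfg : EquivMod K f g) (hgh : EquivMod K g h) : EquivMod K f h := by
  have := K.mul_mem hgh hfg
  rw [End.mul_def] at this
  simpa [EquivMod] using this

theorem EquivMod.comp_right (hfg : EquivMod K f g) (e : mk y ⟶ mk z) :
    EquivMod K (f ≫ e) (g ≫ e) := by
  simpa [EquivMod] using hfg

end EquivMod

section LoopsTrivialMod

variable {a b y z : X} {K : Subgroup (FundamentalGroup X a)} {f : mk a ⟶ mk y} {W : Set X}

def LoopsTrivialMod (K : Subgroup (FundamentalGroup X a)) (f : mk a ⟶ mk y) (W : Set X) : Prop :=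
  ∀ β : Path y y, range β ⊆ W → EquivMod K (f ≫ pathHom β) f

theorem LoopsTrivialMod.equivMod (hf : LoopsTrivialMod K f W) {p q : Path y z}
    (hp : range p ⊆ W) (hq : range q ⊆ W) : EquivMod K (f ≫ pathHom p) (f ≫ pathHom q) := by
  have hpq : range (p.trans q.symm) ⊆ W := by
    rw [Path.trans_range, Path.symm_range]; exact union_subset hp hq
  simpa [pathHom_trans, pathHom_symm] using (hf _ hpq).comp_right (pathHom q)

theorem LoopsTrivialMod.comp (hf : LoopsTrivialMod K f W) {p : Path y z} (hp : range p ⊆ W) :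
    LoopsTrivialMod K (f ≫ pathHom p) W := fun β hβ => by
  have hpβ : range (p.trans β) ⊆ W := by rw [Path.trans_range]; exact union_subset hp hβ
  simpa [pathHom_trans] using hf.equivMod hpβ hp

theorem initSegHom_comp_of_eq_zero (γ δ : Path a b) {s : I} (hs : s = 0) {η : Path (γ s) (δ s)}
    (hη : ∀ u, η u = a) : initSegHom γ s ≫ pathHom η = initSegHom δ s := by
  rw [initSegHom_of_eq_zero γ hs, initSegHom_of_eq_zero δ hs, pathHom_eq_eqToHom hη, eqToHom_trans]

theorem equivMod_of_initSegHom_of_eq_one {γ δ : Path a b} {s : I} (hs : s = 1)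
    {η : Path (γ s) (δ s)} (hη : ∀ u, η u = b)
    (h : EquivMod K (initSegHom γ s ≫ pathHom η) (initSegHom δ s)) :
    EquivMod K (pathHom γ) (pathHom δ) := by
  rw [initSegHom_of_eq_one γ hs, initSegHom_of_eq_one δ hs, pathHom_eq_eqToHom hη, Category.assoc,
    eqToHom_trans] at h
  simpa [EquivMod] using h

theorem range_subpath_subset {γ : Path a b} {s t : I} (hst : s ≤ t) (h : MapsTo γ (Icc s t) W) :
    range (γ.subpath s t) ⊆ W := by
  rw [Path.range_subpath_of_le γ s t hst]; exact h.image_subset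

theorem LoopsTrivialMod.equivMod_initSegHom {γ δ : Path a b} {s t : I}
    (hW : LoopsTrivialMod K (initSegHom γ s) W) (hst : s ≤ t)
    (hγ : MapsTo γ (Icc s t) W) (hδ : MapsTo δ (Icc s t) W)
    {η : Path (γ s) (δ s)} (hηW : range η ⊆ W)
    (hη : EquivMod K (initSegHom γ s ≫ pathHom η) (initSegHom δ s))
    {η' : Path (γ t) (δ t)} (hη'W : range η' ⊆ W) :
    EquivMod K (initSegHom γ t ≫ pathHom η') (initSegHom δ t) := by
  rw [← initSegHom_comp_subpath γ s t, ← initSegHom_comp_subpath δ s t, Category.assoc,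
    ← pathHom_trans]
  refine (hW.equivMod (q := η.trans (δ.subpath s t)) ?_ ?_).trans ?_
  · rw [Path.trans_range]; exact union_subset (range_subpath_subset hst hγ) hη'W
  · rw [Path.trans_range]; exact union_subset hηW (range_subpath_subset hst hδ)
  · simpa only [pathHom_trans, Category.assoc] using hη.comp_right _

theorem equivMod_of_subdivision {γ δ : Path a b} {t : ℕ → I} {m : ℕ} {W : ℕ → Set X}
    (ht0 : t 0 = 0) (htm : t m = 1) (ht : Monotone t)
    (hW : ∀ i, LoopsTrivialMod K (initSegHom γ (t i)) (W i))
    (hγ : ∀ i, MapsTo γ (Icc (t i) (t (i + 1))) (W i))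
    (hδ : ∀ i < m, MapsTo δ (Icc (t i) (t (i + 1))) (W i))
    (hjoin : ∀ i < m, JoinedIn (W i ∩ W (i + 1)) (γ (t (i + 1))) (δ (t (i + 1)))) :
    EquivMod K (pathHom γ) (pathHom δ) := by
  have hγt (i : ℕ) : γ (t i) ∈ W i := hγ i ⟨le_rfl, ht (Nat.le_succ i)⟩
  have claim : ∀ i ≤ m, ∃ η : Path (γ (t i)) (δ (t i)), range η ⊆ W i ∧
      EquivMod K (initSegHom γ (t i) ≫ pathHom η) (initSegHom δ (t i)) := by
    intro i hi
    induction i with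
    | zero =>
      have hγ0 : γ (t 0) = a := by rw [ht0, γ.source]
      refine ⟨(Path.refl a).cast hγ0 (by rw [ht0, δ.source]), ?_, ?_⟩
      · exact range_subset_iff.mpr fun _ => (show a ∈ W 0 from hγ0 ▸ hγt 0)
      · rw [initSegHom_comp_of_eq_zero γ δ ht0 fun _ => rfl]; exact .refl _
    | succ i ih =>
      obtain ⟨η, hηW, hη⟩ := ih (by omega)
      have hj := hjoin i (by omega)
      exact ⟨hj.somePath, range_subset_iff.mpr fun u => (hj.somePath_mem u).2,
        (hW i).equivMod_initSegHom (ht (Nat.le_succ i)) (hγ i) (hδ i (by omega)) hηW hη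
          (range_subset_iff.mpr fun u => (hj.somePath_mem u).1)⟩
  obtain ⟨η, hηW, hη⟩ := claim m le_rfl
  have hγm : γ (t m) = b := by rw [htm, γ.target]
  let c : Path (γ (t m)) (δ (t m)) := (Path.refl b).cast hγm (by rw [htm, δ.target])
  have hc : range c ⊆ W m := range_subset_iff.mpr fun _ => (show b ∈ W m from hγm ▸ hγt m)
  exact equivMod_of_initSegHom_of_eq_one htm (η := c) (fun _ => rfl)
    (((hW m).equivMod hc hηW).trans hη)

theorem _root_.unitInterval.uIcc_subset_ball {s t : I} {r : ℝ} (ht : t ∈ Metric.ball s r) :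
    uIcc s t ⊆ Metric.ball s r := by
  intro u hu
  rw [Metric.mem_ball, Subtype.dist_eq, dist_comm] at ht ⊢
  refine (Real.dist_left_le_of_mem_uIcc ?_).trans_lt ht
  rcases mem_uIcc.mp hu with h | h
  exacts [mem_uIcc.mpr (Or.inl h), mem_uIcc.mpr (Or.inr h)]

theorem exists_subdivision_loopsTrivialMod {K : Subgroup (FundamentalGroup X a)} (γ : Path a b)
    (h : ∀ s, ∃ W, IsOpen W ∧ γ s ∈ W ∧ LoopsTrivialMod K (initSegHom γ s) W) :
    ∃ (t : ℕ → I) (m : ℕ) (W : ℕ → Set X), t 0 = 0 ∧ t m = 1 ∧ Monotone t ∧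
      ∀ i, IsOpen (W i) ∧ MapsTo γ (Icc (t i) (t (i + 1))) (W i) ∧
        LoopsTrivialMod K (initSegHom γ (t i)) (W i) := by
  choose W hWo hγW hW using h
  have hball (s : I) : ∃ r > 0, Metric.ball s r ⊆ γ ⁻¹' W s :=
    Metric.isOpen_iff.mp ((hWo s).preimage γ.continuous) s (hγW s)
  choose r hr0 hr using hball
  obtain ⟨t, ht0, ht, ⟨m, hm⟩, hcov⟩ := exists_monotone_Icc_subset_open_cover_unitInterval
    (fun s => Metric.isOpen_ball) (fun s _ => mem_iUnion.mpr ⟨s, Metric.mem_ball_self (hr0 s)⟩)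
  choose c hc using hcov
  refine ⟨t, m, fun i => W (c i), ht0, hm m le_rfl, ht,
    fun i => ⟨hWo _, fun u hu => hr _ (hc i hu), ?_⟩⟩
  have hti : t i ∈ Metric.ball (c i) (r (c i)) := hc i ⟨le_rfl, ht (Nat.le_succ i)⟩
  -- Balls of `I` are intervals, so the initial segment up to `t i` is the one up to `c i`
  -- followed by a subpath inside `W (c i)`.
  rw [← initSegHom_comp_subpath γ (c i) (t i)]
  refine (hW _).comp ?_
  rw [Path.range_subpath]
  exact image_subset_iff.mpr ((uIcc_subset_ball hti).trans (hr _))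

theorem _root_.Path.eventually_mapsTo {γ : Path a b} {T : Set I} {U : Set X} (hT : IsCompact T)
    (hU : IsOpen U) (h : MapsTo γ T U) : ∀ᶠ δ : Path a b in 𝓝 γ, MapsTo δ T U :=
  ((ContinuousMap.isOpen_setOfPred_mapsTo hT hU).preimage continuous_induced_dom).mem_nhds h

theorem eventually_equivMod [LocallyPathConnectedSpace X] {K : Subgroup (FundamentalGroup X a)}
    (γ : Path a b) (h : ∀ s, ∃ W, IsOpen W ∧ γ s ∈ W ∧ LoopsTrivialMod K (initSegHom γ s) W) :
    ∀ᶠ δ in 𝓝 γ, EquivMod K (pathHom γ) (pathHom δ) := by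
  obtain ⟨t, m, W, ht0, htm, ht, hW⟩ := exists_subdivision_loopsTrivialMod γ h
  have hmaps (i : ℕ) : ∀ᶠ δ : Path a b in 𝓝 γ, MapsTo δ (Icc (t i) (t (i + 1))) (W i) :=
    Path.eventually_mapsTo isCompact_Icc (hW i).1 (hW i).2.1
  have hjoin (i : ℕ) :
      ∀ᶠ δ : Path a b in 𝓝 γ, JoinedIn (W i ∩ W (i + 1)) (γ (t (i + 1))) (δ (t (i + 1))) := by
    have hmem : γ (t (i + 1)) ∈ W i ∩ W (i + 1) :=
      ⟨(hW i).2.1 ⟨ht (Nat.le_succ i), le_rfl⟩, (hW (i + 1)).2.1 ⟨le_rfl, ht (Nat.le_succ _)⟩⟩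
    exact (continuous_eval_const (t (i + 1))).continuousAt.preimage_mem_nhds
      ((((hW i).1.inter (hW (i + 1)).1).pathComponentIn _).mem_nhds (mem_pathComponentIn_self hmem))
  filter_upwards [(finite_Iio m).eventually_all.mpr fun i _ => hmaps i,
    (finite_Iio m).eventually_all.mpr fun i _ => hjoin i] with δ hδ hδ'
  exact equivMod_of_subdivision ht0 htm ht (fun i => (hW i).2.2) (fun i => (hW i).2.1) hδ hδ'

end LoopsTrivialMod

section FundamentalGroup

variable {a x₀ x : X}

theorem _root_.Path.exists_isOpen_of_mem_nhds_refl {s : Set (Path a a)}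
    (hs : s ∈ 𝓝 (Path.refl a)) :
    ∃ U, IsOpen U ∧ a ∈ U ∧ ∀ β : Path a a, range β ⊆ U → β ∈ s := by
  rw [nhds_induced, mem_comap] at hs
  obtain ⟨O, hO, hOs⟩ := hs
  have hle : (𝓝 a).lift' (fun U => {f : C(I, X) | range f ⊆ U}) ≤ 𝓝 (Path.refl a : C(I, X)) := by
    refine tendsto_id'.mp (ContinuousMap.tendsto_nhds_compactOpen.mpr fun T _ U hU hTU => ?_)
    rcases T.eq_empty_or_nonempty with rfl | ⟨u, hu⟩
    · exact univ_mem' fun f => mapsTo_empty _ _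
    · exact mem_of_superset (mem_lift' (hU.mem_nhds (hTU hu)))
        fun f hf v _ => hf (mem_range_self v)
  obtain ⟨U, ⟨haU, hU⟩, hUO⟩ :=
    ((nhds_basis_opens a).lift' fun _ _ h f hf => hf.trans h).mem_iff.mp (hle hO)
  exact ⟨U, hU, haU, fun β hβ => hOs (hUO hβ)⟩

theorem isOpen_whiskerTopOnPi_iff {O : Set (FundamentalGroup X a)} :
    IsOpen[whiskerTopOnPi a] O ↔
      ∀ g ∈ O, ∃ U, IsOpen U ∧ a ∈ U ∧ ∀ β : Path a a, range β ⊆ U → g * loopClass β ∈ O := by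
  constructor
  · intro hO
    induction hO with
    | basic s hs =>
      obtain ⟨g₀, U, hU, haU, rfl⟩ := hs
      rintro _ ⟨β₀, hβ₀, rfl⟩
      refine ⟨U, hU, haU, fun β hβ => ⟨β.trans β₀, fun t => ?_, by rw [loopClass_trans, mul_assoc]⟩⟩
      exact (Path.trans_range β β₀ ▸ union_subset hβ (range_subset_iff.mpr hβ₀)) (mem_range_self t)
    | univ => exact fun g _ => ⟨univ, isOpen_univ, trivial, fun _ _ => trivial⟩
    | inter s t _ _ ihs iht =>
      rintro g ⟨hgs, hgt⟩
      obtain ⟨U₁, hU₁, haU₁, h₁⟩ := ihs g hgs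
      obtain ⟨U₂, hU₂, haU₂, h₂⟩ := iht g hgt
      exact ⟨U₁ ∩ U₂, hU₁.inter hU₂, ⟨haU₁, haU₂⟩,
        fun β hβ => ⟨h₁ β (hβ.trans inter_subset_left), h₂ β (hβ.trans inter_subset_right)⟩⟩
    | sUnion S _ ih =>
      rintro g ⟨s, hsS, hgs⟩
      obtain ⟨U, hU, haU, h⟩ := ih s hsS g hgs
      exact ⟨U, hU, haU, fun β hβ => ⟨s, hsS, h β hβ⟩⟩
  · intro h
    let _ := whiskerTopOnPi a
    refine isOpen_iff_mem_nhds.mpr fun g hg => ?_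
    obtain ⟨U, hU, haU, hUO⟩ := h g hg
    have hB : IsOpen {g' | ∃ β : Path a a, (∀ t, β t ∈ U) ∧ g' = g * loopClass β} :=
      TopologicalSpace.isOpen_generateFrom_of_mem ⟨g, U, hU, haU, rfl⟩
    refine mem_of_superset (hB.mem_nhds ⟨Path.refl a, fun _ => haU, (mul_one g).symm⟩) ?_
    rintro _ ⟨β, hβ, rfl⟩
    exact hUO β (range_subset_iff.mpr hβ)

theorem isClosed_qTop_iff {S : Set (FundamentalGroup X a)} :
    IsClosed[qTop a] S ↔ IsOpen {γ : Path a a | loopClass γ ∉ S} := by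
  rw [← @isOpen_compl_iff _ _ (qTop a)]
  exact isOpen_coinduced

theorem isClosed_whiskerTopOnPi_of_isClosed_qTop {S : Set (FundamentalGroup X a)}
    (h : IsClosed[qTop a] S) : IsClosed[whiskerTopOnPi a] S := by
  rw [← @isOpen_compl_iff _ _ (whiskerTopOnPi a), isOpen_whiskerTopOnPi_iff]
  intro g hg
  obtain ⟨γ, rfl⟩ : ∃ γ : Path a a, loopClass γ = g := Path.Homotopic.Quotient.mk_surjective g
  have hO : IsOpen {β : Path a a | loopClass (β.trans γ) ∉ S} :=
    (isClosed_qTop_iff.mp h).preimage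
      (Path.continuous_trans.comp (continuous_id.prodMk continuous_const))
  have hrefl : Path.refl a ∈ {β : Path a a | loopClass (β.trans γ) ∉ S} := by
    show loopClass γ * 1 ∉ S
    rwa [mul_one]
  obtain ⟨U, hU, haU, hUO⟩ := Path.exists_isOpen_of_mem_nhds_refl (hO.mem_nhds hrefl)
  exact ⟨U, hU, haU, hUO⟩

theorem mem_loopSubgroup_iff {V : Set X} (haV : a ∈ V) {g : FundamentalGroup X a} :
    g ∈ loopSubgroup a V ↔ ∃ β : Path a a, range β ⊆ V ∧ loopClass β = g := by
  refine ⟨fun hg => ?_, fun ⟨β, hβ, hg⟩ =>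
    Subgroup.subset_closure ⟨β, range_subset_iff.mp hβ, hg.symm⟩⟩
  induction hg using Subgroup.closure_induction with
  | mem g hg => obtain ⟨β, hβ, rfl⟩ := hg; exact ⟨β, range_subset_iff.mpr hβ, rfl⟩
  | one => exact ⟨Path.refl a, by simpa using haV, rfl⟩
  | mul g h _ _ ihg ihh =>
    obtain ⟨β, hβ, rfl⟩ := ihg
    obtain ⟨β', hβ', rfl⟩ := ihh
    exact ⟨β'.trans β, by rw [Path.trans_range]; exact union_subset hβ' hβ, rfl⟩
  | inv g _ ih =>
    obtain ⟨β, hβ, rfl⟩ := ih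
    exact ⟨β.symm, by rwa [Path.symm_range], rfl⟩

theorem SLTAt.loopsTrivialMod {S : Subgroup (FundamentalGroup X a)} (hS : SLTAt S) {V : Set X}
    (hV : IsOpen V) (haV : a ∈ V)
    (hSV : (S : Set (FundamentalGroup X a)) * loopSubgroup a V = loopSubgroup a V * S)
    {y : X} (f : mk a ⟶ mk y) :
    ∃ W, IsOpen W ∧ y ∈ W ∧ LoopsTrivialMod (S ⊔ loopSubgroup a V) f W := by
  obtain ⟨c, rfl⟩ : ∃ c : Path a y, pathHom c = f := Path.Homotopic.Quotient.mk_surjective f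
  obtain ⟨W, hW, hyW, hc⟩ := hS y c V hV haV
  refine ⟨W, hW, hyW, fun β hβ => ?_⟩
  rw [EquivMod, ← SetLike.mem_coe, Subgroup.coe_sup_of_mul_comm hSV, ← pathHom_symm,
    ← pathHom_trans, ← pathHom_trans]
  exact hc β (range_subset_iff.mp hβ)

theorem pathConj_loopClass (α : Path x₀ x) (β : Path x x) :
    pathConj α (loopClass ((α.trans β).trans α.symm)) = loopClass β := by
  have h : loopClass ((α.trans β).trans α.symm) = pathHom α ≫ pathHom β ≫ inv (pathHom α) := by
    rw [← pathHom_symm, ← Category.assoc]; rfl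
  simp only [pathConj, FundamentalGroup.fundamentalGroupMulEquivOfPath, Iso.conj_apply, h]
  change Groupoid.inv (pathHom α) ≫ (pathHom α ≫ pathHom β ≫ inv (pathHom α)) ≫ pathHom α =
    pathHom β
  simp

theorem map_pathConj_piSub (α : Path x₀ x) (V : Set X) :
    (piSub α V).map (pathConj α).toMonoidHom = loopSubgroup x V := by
  rw [piSub, loopSubgroup, MonoidHom.map_closure]
  congr 1
  ext g
  constructor
  · rintro ⟨_, ⟨β, hβ, rfl⟩, rfl⟩
    exact ⟨β, hβ, pathConj_loopClass α β⟩
  · rintro ⟨β, hβ, rfl⟩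
    exact ⟨_, ⟨β, hβ, rfl⟩, pathConj_loopClass α β⟩

theorem LocallyQuasinormal.exists_conjSubgroup_mul_comm {H : Subgroup (FundamentalGroup X x₀)}
    (hq : LocallyQuasinormal H) (α : Path x₀ x) {U : Set X} (hU : IsOpen U) (hxU : x ∈ U) :
    ∃ V ⊆ U, IsOpen V ∧ x ∈ V ∧
      (conjSubgroup H α : Set (FundamentalGroup X x)) * loopSubgroup x V =
        loopSubgroup x V * conjSubgroup H α := by
  obtain ⟨V, hVU, hV, hxV, hHV⟩ := hq x α U hU hxU
  refine ⟨V, hVU, hV, hxV, ?_⟩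
  rw [← map_pathConj_piSub, conjSubgroup, Subgroup.coe_map, Subgroup.coe_map, ← Set.image_mul,
    ← Set.image_mul, hHV]

theorem isClosed_qTop_of_isClosed_whiskerTopOnPi [LocallyPathConnectedSpace X]
    {S : Subgroup (FundamentalGroup X a)} (hS : SLTAt S)
    (hcomm : ∀ U, IsOpen U → a ∈ U → ∃ V ⊆ U, IsOpen V ∧ a ∈ V ∧
      (S : Set (FundamentalGroup X a)) * loopSubgroup a V = loopSubgroup a V * S)
    (h : IsClosed[whiskerTopOnPi a] (S : Set (FundamentalGroup X a))) :
    IsClosed[qTop a] (S : Set (FundamentalGroup X a)) := by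
  rw [isClosed_qTop_iff, isOpen_iff_mem_nhds]
  intro γ hγ
  obtain ⟨U, hU, haU, hγU⟩ := isOpen_whiskerTopOnPi_iff.mp h.isOpen_compl _ hγ
  obtain ⟨V, hVU, hV, haV, hSV⟩ := hcomm U hU haU
  filter_upwards [eventually_equivMod γ fun s => hS.loopsTrivialMod hV haV hSV (initSegHom γ s)]
    with δ hδ hδS
  have hγK : loopClass γ ∈ ((S ⊔ loopSubgroup a V : Subgroup _) : Set (FundamentalGroup X a)) := by
    have := (S ⊔ loopSubgroup a V).mul_mem (Subgroup.mem_sup_left hδS)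
      (equivMod_iff_inv_mul_mem.mp hδ)
    rwa [pathHom_eq_loopClass, pathHom_eq_loopClass, mul_inv_cancel_left] at this
  rw [Subgroup.coe_sup_of_mul_comm hSV] at hγK
  obtain ⟨s, hs, l, hl, hsl⟩ := hγK
  obtain ⟨β, hβV, rfl⟩ := (mem_loopSubgroup_iff haV).mp hl
  refine hγU β.symm (by rw [Path.symm_range]; exact hβV.trans hVU) ?_
  rwa [loopClass_symm, ← hsl, mul_inv_cancel_right]

end FundamentalGroup

theorem closed_qtop_iff_closed_whisker_general [LocallyPathConnectedSpace X]
    {x₀ x : X} (H : Subgroup (FundamentalGroup X x₀)) (hSLT : IsHSLT H)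
    (hq : LocallyQuasinormal H) (α : Path x₀ x) :
    @IsClosed _ (qTop x) (conjSubgroup H α : Set (FundamentalGroup X x)) ↔
      @IsClosed _ (whiskerTopOnPi x)
        (conjSubgroup H α : Set (FundamentalGroup X x)) :=
  ⟨isClosed_whiskerTopOnPi_of_isClosed_qTop,
    isClosed_qTop_of_isClosed_whiskerTopOnPi (hSLT x α) fun _ hU hxU =>
      hq.exists_conjSubgroup_mul_comm α hU hxU⟩

/-- Corollary 3.8: for a Peano `H`-SLT space with `H` locally quasinormal,
`H_α` is closed in `π₁^{qtop}(X,x)` iff it is closed in `π₁^{wh}(X,x)`. -/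
theorem closed_qtop_iff_closed_whisker [ConnectedSpace X] [LocallyPathConnectedSpace X]
    {x₀ x : X} (H : Subgroup (FundamentalGroup X x₀)) (hSLT : IsHSLT H)
    (hq : LocallyQuasinormal H) (α : Path x₀ x) :
    @IsClosed _ (qTop x) (conjSubgroup H α : Set (FundamentalGroup X x)) ↔
      @IsClosed _ (whiskerTopOnPi x)
        (conjSubgroup H α : Set (FundamentalGroup X x)) :=
  closed_qtop_iff_closed_whisker_general H hSLT hq α

end Paper
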